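/- For all n ∈ ℕ, k ∈ ℕ, and every complex number θ, one has L_{n,k}(e^{iθ}) / e^{i n θ/2} = (2i)^n · (d/dθ)^k (sin(θ/2))^n, i.e. L_{n,k}(e^{iθ}) = e^{i n θ/2} · (2i)^n · f^{(k)}(θ) where f(θ) = (sin(θ/2))^n and f^{(k)} denotes its k-th complex derivative. -/

import Mathlib

/-!
Since `2i sin (θ/2) = e^{iθ/2} - e^{-iθ/2}`, the binomial theorem expands `(2i sin (θ/2))^n` as
`∑ⱼ (-1)^{n-j} C(n,j) e^{i(j - n/2)θ}`. Differentiating `k` times multiplies the `j`-th term by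
`(i(j - n/2))^k`, and the prefactor `e^{inθ/2}` turns `e^{i(j - n/2)θ}` into `(e^{iθ})^j`.
-/

noncomputable def circLaguerre (n k : ℕ) : Polynomial ℂ :=
  ∑ j ∈ Finset.range (n + 1),
    Polynomial.C (Complex.I ^ k * (-1) ^ (n - j) * (n.choose j : ℂ) * ((j : ℂ) - n / 2) ^ k) *
      Polynomial.X ^ j

open Finset Complex

theorem iteratedDeriv_sum_mul_cexp {ι : Type*} (s : Finset ι) (c a : ι → ℂ) (k : ℕ) (x : ℂ) :
    iteratedDeriv k (fun z ↦ ∑ j ∈ s, c j * exp (a j * z)) x =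
      ∑ j ∈ s, c j * a j ^ k * exp (a j * x) := by
  rw [iteratedDeriv_fun_sum fun j _ ↦ by fun_prop]
  refine sum_congr rfl fun j _ ↦ ?_
  rw [iteratedDeriv_const_mul_field, iteratedDeriv_cexp_const_mul, mul_assoc]

theorem two_I_mul_sin_half_pow (n : ℕ) (x : ℂ) :
    (2 * I * sin (x / 2)) ^ n =
      ∑ j ∈ range (n + 1), (-1) ^ (n - j) * (n.choose j : ℂ) * exp (I * (j - n / 2) * x) := by
  have hsin : 2 * I * sin (x / 2) = exp (I * x / 2) + (-exp (-(I * x / 2))) := by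
    rw [sin]; ring_nf; rw [I_sq]; ring
  rw [hsin, add_pow]
  refine sum_congr rfl fun j hj ↦ ?_
  have hjn : j ≤ n := Nat.lt_succ_iff.mp (mem_range.mp hj)
  rw [neg_pow, ← exp_nat_mul, ← exp_nat_mul,
    show ∀ a b s c : ℂ, exp a * (s * exp b) * c = s * c * (exp a * exp b) by intros; ring, ← exp_add]
  congr 2
  push_cast [Nat.cast_sub hjn]
  ring

theorem stmt5 (n k : ℕ) (θ : ℂ) :
    (circLaguerre n k).eval (Complex.exp (Complex.I * θ)) =
      Complex.exp (Complex.I * n * θ / 2) * (2 * Complex.I) ^ n *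
        iteratedDeriv k (fun x : ℂ => (Complex.sin (x / 2)) ^ n) θ := by
  calc (circLaguerre n k).eval (exp (I * θ))
      = ∑ j ∈ range (n + 1),
          I ^ k * (-1) ^ (n - j) * (n.choose j : ℂ) * ((j : ℂ) - n / 2) ^ k * exp (I * θ) ^ j := by
        simp [circLaguerre, Polynomial.eval_finsetSum]
    _ = exp (I * n * θ / 2) * ∑ j ∈ range (n + 1),
          (-1) ^ (n - j) * (n.choose j : ℂ) * (I * (j - n / 2)) ^ k * exp (I * (j - n / 2) * θ) := by
        rw [mul_sum]
        refine sum_congr rfl fun j _ ↦ ?_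
        have hexp : exp (I * θ) ^ j = exp (I * n * θ / 2) * exp (I * (j - n / 2) * θ) := by
          rw [← exp_nat_mul, ← exp_add]
          ring_nf
        rw [hexp, mul_pow]
        ring
    _ = exp (I * n * θ / 2) * iteratedDeriv k (fun x ↦ (2 * I * sin (x / 2)) ^ n) θ := by
        simp_rw [two_I_mul_sin_half_pow, iteratedDeriv_sum_mul_cexp]
    _ = _ := by simp_rw [mul_pow, iteratedDeriv_const_mul_field, mul_assoc]
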